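/- Equality case of entropy decay: if φ : [0,∞) → ℝ is strictly convex with φ(0) = φ(1) = 0, then for a probability vector p ∈ Δ^N with ⟨u,p⟩ > 0 one has E(Mp) = E(p) if and only if there exist α, β, λ ≥ 0 with α + β + λ = 1 and p = α e_0 + λ v + β e_N, where e_0, e_N are the standard basis vectors at the absorbing states and v is the zero-extended quasi-stationary vector. -/

import Mathlib

open Finset Matrix Filter

/-- The (N+1)×(N+1) Moran transition matrix (indices 0,…,N) built from a
type selection vector `s`. -/
noncomputable def moranM (N : ℕ) (s : ℕ → ℝ) : Matrix (Fin (N + 1)) (Fin (N + 1)) ℝ :=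
  fun i j =>
    if (i : ℕ) + 1 = (j : ℕ) then ((j : ℕ) : ℝ) / N * (1 - s (j : ℕ))
    else if (i : ℕ) = (j : ℕ) + 1 then ((N : ℝ) - ((j : ℕ) : ℝ)) / N * s (j : ℕ)
    else if (i : ℕ) = (j : ℕ) then
      1 - ((j : ℕ) : ℝ) / N * (1 - s (j : ℕ)) - ((N : ℝ) - ((j : ℕ) : ℝ)) / N * s (j : ℕ)
    else 0

/-- `s` is a type selection vector: `s 0 = 0`, `s N = 1`, `0 < s i < 1` in the interior. -/
def IsTypeSelection (N : ℕ) (s : ℕ → ℝ) : Prop :=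
  s 0 = 0 ∧ s N = 1 ∧ ∀ i : ℕ, 0 < i → i < N → 0 < s i ∧ s i < 1

/-- The core matrix: the (N−1)×(N−1) submatrix of the Moran matrix on states 1,…,N−1. -/
noncomputable def moranCore (N : ℕ) (s : ℕ → ℝ) : Matrix (Fin (N - 1)) (Fin (N - 1)) ℝ :=
  fun i j =>
    moranM N s ⟨(i : ℕ) + 1, by have := i.isLt; omega⟩ ⟨(j : ℕ) + 1, by have := j.isLt; omega⟩

/-- Embedding of core indices {1,…,N−1} into the full index set {0,…,N}. -/
def embIn (N : ℕ) (i : Fin (N - 1)) : Fin (N + 1) :=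
  ⟨(i : ℕ) + 1, by have := i.isLt; omega⟩

/-!
Let `P i j = M̃ i j * v j / (μ₁ * v i)` be the Doob transform of the core matrix by its Perron
vector: it is row-stochastic, and `u i * v i` is an invariant measure for it. The ratio vector
`w i = p i / (v i * ⟨u, p⟩)` entering the entropy is carried to `P w` by `M`, because the
interior rows of `M` vanish on the absorbing columns and `⟨u, M p⟩ = μ₁ ⟨u, p⟩`. Hence
`E (M p) = ∑ φ ((P w) i) u i v i ≤ ∑ (P (φ ∘ w)) i u i v i = E p` by Jensen's inequality in each
row, and equality forces, by strict convexity, `w j = (P w) i` whenever `P i j > 0`. The diagonal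
and subdiagonal of the core are positive, so `w` is constant, i.e. `p` is a multiple of `v` on
the interior states; conversely every such `p` has `E p = E (M p) = 0` since `φ 1 = 0`.
-/

section RelativeEntropy

variable {ι : Type*} {A : Matrix ι ι ℝ} {u v x : ι → ℝ} {μ : ℝ}

noncomputable def doobTransform (A : Matrix ι ι ℝ) (v : ι → ℝ) (μ : ℝ) : Matrix ι ι ℝ :=
  fun i j => A i j * v j / (μ * v i)

lemma doobTransform_nonneg (hA : ∀ i j, 0 ≤ A i j) (hv : ∀ i, 0 < v i) (hμ : 0 ≤ μ) (i j : ι) :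
    0 ≤ doobTransform A v μ i j :=
  div_nonneg (mul_nonneg (hA i j) (hv j).le) (mul_nonneg hμ (hv i).le)

variable [Fintype ι]

noncomputable def entropyRatio (u v x : ι → ℝ) (i : ι) : ℝ := x i / (v i * (u ⬝ᵥ x))

noncomputable def relEntropy (φ : ℝ → ℝ) (u v x : ι → ℝ) : ℝ :=
  ∑ i, φ (entropyRatio u v x i) * v i * u i

lemma sum_doobTransform (hAv : A *ᵥ v = μ • v) (hμ : μ ≠ 0) {i : ι} (hv : v i ≠ 0) :
    ∑ j, doobTransform A v μ i j = 1 := by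
  have hrow : ∑ j, A i j * v j = μ * v i := congrFun hAv i
  simp only [doobTransform]
  rw [← Finset.sum_div, hrow, div_self (mul_ne_zero hμ hv)]

lemma pos_of_mulVec_eq_smul_of_diag_pos (hA : ∀ i j, 0 ≤ A i j) (hv : ∀ i, 0 < v i)
    (hAv : A *ᵥ v = μ • v) {i : ι} (hii : 0 < A i i) : 0 < μ := by
  have hrow : μ * v i = ∑ j, A i j * v j := (congrFun hAv i).symm
  have hdiag : A i i * v i ≤ ∑ j, A i j * v j :=
    Finset.single_le_sum (fun j _ => mul_nonneg (hA i j) (hv j).le) (mem_univ i)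
  refine lt_of_mul_lt_mul_right ?_ (hv i).le
  rw [zero_mul, hrow]
  exact (mul_pos hii (hv i)).trans_le hdiag

lemma dotProduct_mulVec_of_vecMul_eq_smul (huA : u ᵥ* A = μ • u) (x : ι → ℝ) :
    u ⬝ᵥ (A *ᵥ x) = μ * (u ⬝ᵥ x) := by
  rw [dotProduct_mulVec, huA, smul_dotProduct, smul_eq_mul]

lemma entropyRatio_nonneg (hu : ∀ i, 0 < u i) (hv : ∀ i, 0 < v i) (hx : 0 ≤ x) (i : ι) :
    0 ≤ entropyRatio u v x i :=
  div_nonneg (hx i) (mul_nonneg (hv i).le (dotProduct_nonneg_of_nonneg (fun j => (hu j).le) hx))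

lemma entropyRatio_mulVec (huA : u ᵥ* A = μ • u) (hv : ∀ i, v i ≠ 0) (x : ι → ℝ) :
    entropyRatio u v (A *ᵥ x) = doobTransform A v μ *ᵥ entropyRatio u v x := by
  ext i
  rw [entropyRatio, dotProduct_mulVec_of_vecMul_eq_smul huA]
  simp only [entropyRatio, mulVec, dotProduct, doobTransform, Finset.sum_div]
  refine Finset.sum_congr rfl fun j _ => ?_
  field_simp [hv i, hv j]

lemma sum_doobTransform_mulVec_mul (huA : u ᵥ* A = μ • u) (hμ : μ ≠ 0) (hv : ∀ i, v i ≠ 0)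
    (f : ι → ℝ) : ∑ i, (doobTransform A v μ *ᵥ f) i * v i * u i = ∑ i, f i * v i * u i := by
  have hcol : ∀ j, ∑ i, u i * A i j = μ * u j := fun j => congrFun huA j
  calc ∑ i, (doobTransform A v μ *ᵥ f) i * v i * u i
      = ∑ i, ∑ j, u i * A i j * (f j * v j) / μ := by
        refine Finset.sum_congr rfl fun i _ => ?_
        simp only [mulVec, dotProduct, doobTransform, Finset.sum_mul]
        refine Finset.sum_congr rfl fun j _ => ?_
        field_simp [hv i]
    _ = ∑ j, (∑ i, u i * A i j) * (f j * v j) / μ := by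
        rw [Finset.sum_comm]
        simp only [Finset.sum_mul, Finset.sum_div]
    _ = ∑ i, f i * v i * u i := by
        refine Finset.sum_congr rfl fun j _ => ?_
        rw [hcol]
        field_simp

theorem entropyRatio_eq_of_relEntropy_mulVec_eq {φ : ℝ → ℝ}
    (hφ : StrictConvexOn ℝ (Set.Ici 0) φ) (hA : ∀ i j, 0 ≤ A i j) (hu : ∀ i, 0 < u i)
    (hv : ∀ i, 0 < v i) (hμ : 0 < μ) (huA : u ᵥ* A = μ • u) (hAv : A *ᵥ v = μ • v)
    (hx : 0 ≤ x) (h : relEntropy φ u v (A *ᵥ x) = relEntropy φ u v x) {i j : ι}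
    (hij : A i j ≠ 0) :
    entropyRatio u v x j = entropyRatio u v (A *ᵥ x) i := by
  set P := doobTransform A v μ
  set w := entropyRatio u v x
  have hv' (k : ι) : v k ≠ 0 := (hv k).ne'
  have hAw : entropyRatio u v (A *ᵥ x) = P *ᵥ w := entropyRatio_mulVec huA hv' x
  have hP_nonneg (k l : ι) : 0 ≤ P k l := doobTransform_nonneg hA hv hμ.le k l
  have hP_sum (k : ι) : ∑ l, P k l = 1 := sum_doobTransform hAv hμ.ne' (hv' k)
  have hw_nonneg (l : ι) (_ : l ∈ univ) : w l ∈ Set.Ici 0 := entropyRatio_nonneg hu hv hx l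
  have jensen (k : ι) : φ ((P *ᵥ w) k) ≤ (P *ᵥ fun l => φ (w l)) k := by
    simpa only [mulVec, dotProduct, smul_eq_mul] using
      hφ.convexOn.map_sum_le (fun l _ => hP_nonneg k l) (hP_sum k) hw_nonneg
  have hsum : ∑ k, φ ((P *ᵥ w) k) * v k * u k = ∑ k, (P *ᵥ fun l => φ (w l)) k * v k * u k := by
    rw [sum_doobTransform_mulVec_mul huA hμ.ne' hv', ← hAw]
    exact h
  have hequal : φ ((P *ᵥ w) i) = (P *ᵥ fun l => φ (w l)) i := by
    have := (Finset.sum_eq_sum_iff_of_le fun k _ => mul_le_mul_of_nonneg_right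
      (mul_le_mul_of_nonneg_right (jensen k) (hv k).le) (hu k).le).1 hsum i (mem_univ i)
    exact mul_right_cancel₀ (hv' i) (mul_right_cancel₀ (hu i).ne' this)
  have hPij : P i j ≠ 0 :=
    (div_pos (mul_pos ((hA i j).lt_of_ne' hij) (hv j)) (mul_pos hμ (hv i))).ne'
  have hcenter := (hφ.map_sum_eq_iff' (fun l _ => hP_nonneg i l) (hP_sum i) hw_nonneg).1
    (by simpa only [mulVec, dotProduct, smul_eq_mul] using hequal) j (mem_univ j) hPij
  rw [hAw]
  simpa only [mulVec, dotProduct, smul_eq_mul] using hcenter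

lemma relEntropy_smul_self {φ : ℝ → ℝ} (hφ1 : φ 1 = 0) (huv : u ⬝ᵥ v = 1) (hv : ∀ i, v i ≠ 0)
    {c : ℝ} (hc : c ≠ 0) : relEntropy φ u v (c • v) = 0 := by
  refine Finset.sum_eq_zero fun i _ => ?_
  have hratio : entropyRatio u v (c • v) i = 1 := by
    rw [entropyRatio, dotProduct_smul, huv, Pi.smul_apply, smul_eq_mul, smul_eq_mul, mul_one,
      mul_comm c, div_self (mul_ne_zero (hv i) hc)]
  rw [hratio, hφ1, zero_mul, zero_mul]

lemma eq_dotProduct_smul_of_entropyRatio_eq (huv : u ⬝ᵥ v = 1) (hv : ∀ i, v i ≠ 0)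
    (hux : u ⬝ᵥ x ≠ 0) (h : ∀ i j, entropyRatio u v x i = entropyRatio u v x j) :
    x = (u ⬝ᵥ x) • v := by
  have hxi (i : ι) : x i = entropyRatio u v x i * (u ⬝ᵥ x) * v i := by
    rw [entropyRatio]; field_simp [hv i, hux]
  ext i
  have hone : entropyRatio u v x i = 1 := by
    have : u ⬝ᵥ x = entropyRatio u v x i * (u ⬝ᵥ x) :=
      calc u ⬝ᵥ x = ∑ j, u j * x j := rfl
        _ = ∑ j, entropyRatio u v x i * (u ⬝ᵥ x) * (u j * v j) :=
          Finset.sum_congr rfl fun j _ => by rw [hxi j, h j i]; ring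
        _ = entropyRatio u v x i * (u ⬝ᵥ x) := by
          rw [← Finset.mul_sum]
          change _ * (u ⬝ᵥ v) = _
          rw [huv, mul_one]
    exact (mul_eq_right₀ hux).1 this.symm
  rw [hxi i, hone, one_mul, Pi.smul_apply, smul_eq_mul]

end RelativeEntropy

lemma Fin.apply_eq_apply_of_forall_succ {α : Type*} {n : ℕ} {w : Fin n → α}
    (h : ∀ i j : Fin n, (i : ℕ) = j + 1 → w i = w j) (i j : Fin n) : w i = w j := by
  suffices hzero : ∀ (t : ℕ) (ht : t < n), w ⟨t, ht⟩ = w ⟨0, by omega⟩ by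
    rw [hzero i i.isLt, hzero j j.isLt]
  intro t
  induction t with
  | zero => exact fun _ => rfl
  | succ t ih => exact fun ht => (h _ ⟨t, by omega⟩ rfl).trans (ih (by omega))

section IndexSplitting

variable {N : ℕ}

lemma embIn_ne_zero (k : Fin (N - 1)) : embIn N k ≠ ⟨0, N.succ_pos⟩ :=
  Fin.ne_of_val_ne (Nat.succ_ne_zero k)

lemma embIn_ne_last (k : Fin (N - 1)) : embIn N k ≠ Fin.last N :=
  Fin.ne_of_val_ne (show (k : ℕ) + 1 ≠ N by have := k.isLt; omega)

lemma Fin.eq_zero_or_eq_last_or_eq_embIn (i : Fin (N + 1)) :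
    i = ⟨0, N.succ_pos⟩ ∨ i = Fin.last N ∨ ∃ k, i = embIn N k := by
  by_cases h0 : (i : ℕ) = 0
  · exact Or.inl (Fin.ext h0)
  by_cases hN : (i : ℕ) = N
  · exact Or.inr (Or.inl (Fin.ext hN))
  exact Or.inr (Or.inr ⟨⟨i - 1, by omega⟩, Fin.ext (by simp only [embIn]; omega)⟩)

lemma sum_eq_zero_add_sum_embIn_add_last (hN : 0 < N) (f : Fin (N + 1) → ℝ) :
    ∑ i, f i = f ⟨0, N.succ_pos⟩ + ∑ k, f (embIn N k) + f (Fin.last N) := by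
  obtain ⟨m, rfl⟩ : ∃ m, N = m + 1 := ⟨N - 1, by omega⟩
  rw [Fin.sum_univ_succ, Fin.sum_univ_castSucc, ← add_assoc]
  rfl

lemma eq_smul_single_add_smul_add_smul_single_iff {v : Fin (N - 1) → ℝ} {vext p : Fin (N + 1) → ℝ}
    (hN : 0 < N) (hvx0 : vext ⟨0, N.succ_pos⟩ = 0) (hvxN : vext (Fin.last N) = 0)
    (hvxi : ∀ k, vext (embIn N k) = v k) {α β lam : ℝ} :
    p = α • (Pi.single ⟨0, N.succ_pos⟩ 1 : Fin (N + 1) → ℝ) + lam • vext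
        + β • (Pi.single (Fin.last N) 1 : Fin (N + 1) → ℝ) ↔
      p ⟨0, N.succ_pos⟩ = α ∧ p (Fin.last N) = β ∧ ∀ k, p (embIn N k) = lam * v k := by
  set e₀ : Fin (N + 1) → ℝ := Pi.single ⟨0, N.succ_pos⟩ 1
  set e_N : Fin (N + 1) → ℝ := Pi.single (Fin.last N) 1
  have hne : (⟨0, N.succ_pos⟩ : Fin (N + 1)) ≠ Fin.last N := Fin.ne_of_val_ne hN.ne
  have hzero : (α • e₀ + lam • vext + β • e_N) ⟨0, N.succ_pos⟩ = α := by
    simp only [e₀, e_N, Pi.add_apply, Pi.smul_apply, smul_eq_mul, Pi.single_eq_same,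
      Pi.single_eq_of_ne hne, hvx0]
    ring
  have hlast : (α • e₀ + lam • vext + β • e_N) (Fin.last N) = β := by
    simp only [e₀, e_N, Pi.add_apply, Pi.smul_apply, smul_eq_mul, Pi.single_eq_same,
      Pi.single_eq_of_ne hne.symm, hvxN]
    ring
  have hcore (k : Fin (N - 1)) : (α • e₀ + lam • vext + β • e_N) (embIn N k) = lam * v k := by
    simp only [e₀, e_N, Pi.add_apply, Pi.smul_apply, smul_eq_mul,
      Pi.single_eq_of_ne (embIn_ne_zero k), Pi.single_eq_of_ne (embIn_ne_last k), hvxi]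
    ring
  constructor
  · rintro rfl
    exact ⟨hzero, hlast, hcore⟩
  · rintro ⟨hp0, hplast, hpcore⟩
    ext i
    rcases Fin.eq_zero_or_eq_last_or_eq_embIn i with rfl | rfl | ⟨k, rfl⟩
    · rw [hp0, hzero]
    · rw [hplast, hlast]
    · rw [hpcore, hcore]

end IndexSplitting

section Moran

variable {N : ℕ} {s : ℕ → ℝ}

lemma IsTypeSelection.pos_lt_one (hs : IsTypeSelection N s) (j : Fin (N - 1)) :
    0 < s (j + 1) ∧ s (j + 1) < 1 :=
  hs.2.2 _ (Nat.succ_pos _) (by omega)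

lemma moranCore_diag_pos (hs : IsTypeSelection N s) (i : Fin (N - 1)) :
    0 < moranCore N s i i := by
  obtain ⟨hs0, hs1⟩ := hs.pos_lt_one i
  have hiN : ((i : ℕ) : ℝ) + 2 ≤ N := by exact_mod_cast (by omega : (i : ℕ) + 2 ≤ N)
  have hN : (0 : ℝ) < N := by linarith
  simp only [moranCore, moranM]
  rw [if_neg (by omega), if_neg (by omega), if_true]
  push_cast
  rw [show 1 - ((i : ℝ) + 1) / N * (1 - s (i + 1)) - (N - ((i : ℝ) + 1)) / N * s (i + 1)
      = ((N - ((i : ℝ) + 1)) * (1 - s (i + 1)) + ((i : ℝ) + 1) * s (i + 1)) / N by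
    field_simp; ring]
  apply div_pos _ hN
  nlinarith

lemma moranCore_subdiag_pos (hs : IsTypeSelection N s) {i j : Fin (N - 1)}
    (hij : (i : ℕ) = j + 1) : 0 < moranCore N s i j := by
  obtain ⟨hs0, -⟩ := hs.pos_lt_one j
  have hjN : ((j : ℕ) : ℝ) + 2 ≤ N := by exact_mod_cast (by omega : (j : ℕ) + 2 ≤ N)
  simp only [moranCore, moranM]
  rw [if_neg (by omega), if_pos (by omega)]
  push_cast
  exact mul_pos (div_pos (by linarith) (by linarith)) hs0

lemma moranCore_nonneg (hs : IsTypeSelection N s) (i j : Fin (N - 1)) :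
    0 ≤ moranCore N s i j := by
  rcases eq_or_ne i j with rfl | hij
  · exact (moranCore_diag_pos hs i).le
  obtain ⟨hs0, hs1⟩ := hs.pos_lt_one j
  have hjN : ((j : ℕ) : ℝ) + 2 ≤ N := by exact_mod_cast (by omega : (j : ℕ) + 2 ≤ N)
  simp only [moranCore, moranM]
  split_ifs with hsup hsub hdiag
  · push_cast
    exact mul_nonneg (div_nonneg (by positivity) (by linarith)) (by linarith)
  · push_cast
    exact mul_nonneg (div_nonneg (by linarith) (by linarith)) hs0.le
  · exact absurd (Fin.ext (by simpa using hdiag)) hij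
  · exact le_rfl

lemma moranM_embIn_zero (hs : IsTypeSelection N s) (i : Fin (N - 1)) :
    moranM N s (embIn N i) ⟨0, N.succ_pos⟩ = 0 := by
  have hemb : (embIn N i : ℕ) = i + 1 := rfl
  unfold moranM
  by_cases h : (i : ℕ) = 0
  · rw [if_neg (by simp only [hemb]; omega), if_pos (by simp only [hemb]; omega), Fin.val_mk,
      hs.1, mul_zero]
  · rw [if_neg (by simp only [hemb]; omega), if_neg (by simp only [hemb]; omega),
      if_neg (by simp only [hemb]; omega)]

lemma moranM_embIn_last (hs : IsTypeSelection N s) (i : Fin (N - 1)) :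
    moranM N s (embIn N i) (Fin.last N) = 0 := by
  have hi := i.isLt
  have hemb : (embIn N i : ℕ) = i + 1 := rfl
  unfold moranM
  by_cases h : (i : ℕ) + 2 = N
  · rw [if_pos (by simp only [hemb, Fin.val_last]; omega), Fin.val_last, hs.2.1, sub_self,
      mul_zero]
  · rw [if_neg (by simp only [hemb, Fin.val_last]; omega),
      if_neg (by simp only [hemb, Fin.val_last]; omega),
      if_neg (by simp only [hemb, Fin.val_last]; omega)]

lemma moranM_mulVec_embIn (hs : IsTypeSelection N s) (p : Fin (N + 1) → ℝ) (i : Fin (N - 1)) :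
    (moranM N s *ᵥ p) (embIn N i) = (moranCore N s *ᵥ fun k => p (embIn N k)) i := by
  rw [mulVec, dotProduct, sum_eq_zero_add_sum_embIn_add_last (by have := i.isLt; omega),
    moranM_embIn_zero hs, moranM_embIn_last hs, zero_mul, zero_add, zero_mul, add_zero]
  rfl

theorem moranCore_eq_dotProduct_smul_of_relEntropy_mulVec_eq {μ : ℝ} {u v x : Fin (N - 1) → ℝ}
    {φ : ℝ → ℝ} (hs : IsTypeSelection N s) (hφ : StrictConvexOn ℝ (Set.Ici 0) φ)
    (hu : ∀ i, 0 < u i) (hv : ∀ i, 0 < v i) (hμ : 0 < μ) (huA : u ᵥ* moranCore N s = μ • u)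
    (hAv : moranCore N s *ᵥ v = μ • v) (huv : u ⬝ᵥ v = 1) (hx : 0 ≤ x) (hux : u ⬝ᵥ x ≠ 0)
    (h : relEntropy φ u v (moranCore N s *ᵥ x) = relEntropy φ u v x) :
    x = (u ⬝ᵥ x) • v := by
  -- For `j = i` (positive diagonal) this reads `w i = (P w) i`, so `w` agrees at adjacent states.
  have hratio {i j : Fin (N - 1)} (hij : moranCore N s i j ≠ 0) :=
    entropyRatio_eq_of_relEntropy_mulVec_eq hφ (moranCore_nonneg hs) hu hv hμ huA hAv hx h hij
  refine eq_dotProduct_smul_of_entropyRatio_eq huv (fun i => (hv i).ne') hux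
    (Fin.apply_eq_apply_of_forall_succ fun i j hij => ?_)
  exact ((hratio (moranCore_subdiag_pos hs hij).ne').trans
    (hratio (moranCore_diag_pos hs i).ne').symm).symm

end Moran

/-- equality case of entropy decay: for strictly convex φ with
φ(0) = φ(1) = 0, E(Mp) = E(p) iff p is a convex combination of e₀, the
zero-extended quasi-stationary vector v, and e_N. -/
theorem moran_entropy_decay_equality
    (N : ℕ) (hN : 2 ≤ N) (s : ℕ → ℝ) (hs : IsTypeSelection N s)
    (μ1 : ℝ) (u v : Fin (N - 1) → ℝ)
    (hu : ∀ i, 0 < u i) (hv : ∀ i, 0 < v i)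
    (huM : (moranCore N s).vecMul u = μ1 • u)
    (hMv : (moranCore N s).mulVec v = μ1 • v)
    (hvsum : ∑ i, v i = 1) (huv : ∑ i, u i * v i = 1)
    (vext : Fin (N + 1) → ℝ)
    (hvx0 : vext ⟨0, by omega⟩ = 0) (hvxN : vext (Fin.last N) = 0)
    (hvxi : ∀ i : Fin (N - 1), vext (embIn N i) = v i)
    (φ : ℝ → ℝ) (hφ : StrictConvexOn ℝ (Set.Ici 0) φ) (hφ1 : φ 1 = 0)
    (p : Fin (N + 1) → ℝ) (hp : ∀ i, 0 ≤ p i) (hpsum : ∑ i, p i = 1)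
    (hip : 0 < ∑ i : Fin (N - 1), u i * p (embIn N i))
    (E : (Fin (N + 1) → ℝ) → ℝ)
    (hE : ∀ q : Fin (N + 1) → ℝ, E q = ∑ i : Fin (N - 1),
      φ (q (embIn N i) / (v i * ∑ j : Fin (N - 1), u j * q (embIn N j))) * v i * u i) :
    E ((moranM N s).mulVec p) = E p ↔
      ∃ α β lam : ℝ, 0 ≤ α ∧ 0 ≤ β ∧ 0 ≤ lam ∧ α + β + lam = 1 ∧
        p = α • (Pi.single (⟨0, by omega⟩ : Fin (N + 1)) 1 : Fin (N + 1) → ℝ)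
            + lam • vext
            + β • (Pi.single (Fin.last N) 1 : Fin (N + 1) → ℝ) := by
  set A := moranCore N s
  set x : Fin (N - 1) → ℝ := fun k => p (embIn N k)
  have huv' : u ⬝ᵥ v = 1 := huv
  have hv' (i : Fin (N - 1)) : v i ≠ 0 := (hv i).ne'
  have hμ : 0 < μ1 := pos_of_mulVec_eq_smul_of_diag_pos (moranCore_nonneg hs) hv hMv
    (moranCore_diag_pos hs ⟨0, by omega⟩)
  have hEMp : E (moranM N s *ᵥ p) = relEntropy φ u v (A *ᵥ x) := by
    rw [hE]
    simp only [moranM_mulVec_embIn hs]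
    rfl
  rw [hEMp, show E p = relEntropy φ u v x from hE p]
  constructor
  · intro heq
    have hx : x = (u ⬝ᵥ x) • v := moranCore_eq_dotProduct_smul_of_relEntropy_mulVec_eq hs hφ hu hv
      hμ huM hMv huv' (fun k => hp _) hip.ne' heq
    have hcore_mass : ∑ k, x k = u ⬝ᵥ x := by
      conv_lhs => rw [hx]
      simp only [Pi.smul_apply, smul_eq_mul, ← Finset.mul_sum, hvsum, mul_one]
    have hmass := sum_eq_zero_add_sum_embIn_add_last (by omega) p
    refine ⟨p ⟨0, by omega⟩, p (Fin.last N), u ⬝ᵥ x, hp _, hp _, hip.le, by linarith,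
      (eq_smul_single_add_smul_add_smul_single_iff (by omega) hvx0 hvxN hvxi).2
        ⟨rfl, rfl, fun k => congrFun hx k⟩⟩
  · rintro ⟨α, β, lam, -, -, -, -, hp_eq⟩
    have hx : x = lam • v := funext
      ((eq_smul_single_add_smul_add_smul_single_iff (by omega) hvx0 hvxN hvxi).1 hp_eq).2.2
    have hlam : lam ≠ 0 := by
      have hux : u ⬝ᵥ x = lam := by rw [hx, dotProduct_smul, huv', smul_eq_mul, mul_one]
      exact hux ▸ hip.ne'
    rw [hx, mulVec_smul, hMv, smul_smul, relEntropy_smul_self hφ1 huv' hv' hlam,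
      relEntropy_smul_self hφ1 huv' hv' (mul_ne_zero hlam hμ.ne')]
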